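/- arXiv:1608.01259 — 4 statements merged into one kernel-verified Lean document; each statement's English description precedes it below -/
import Mathlib

section
/- Let D be a domain in ℝ^N, N ≥ 2, and let u : D → [-∞, +∞) be Lebesgue measurable with u⁺ ∈ L¹_loc(D). If u satisfies u(x) ≤ K/(ν_N r^N) ∫_{B(x,r)} u dm_N for all B̄(x,r) ⊂ D for some constant K ≥ 1 (i.e., u is K-quasinearly subharmonic n.s.), then either u ≡ -∞ on D, or u is finite almost everywhere on D and u ∈ L¹_loc(D). -/
open MeasureTheory Metric
open scoped ENNReal

noncomputable section

/-- `ℝ^N` as Euclidean space. -/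
abbrev Euc (N : ℕ) := EuclideanSpace ℝ (Fin N)

/-- `ν_N`: the volume of the unit ball in `ℝ^N`. -/
noncomputable def unitBallVol (N : ℕ) : ℝ := (volume (ball (0 : Euc N) 1)).toReal

/-- Positive part of an extended real, valued in `ℝ≥0∞`. -/
noncomputable def epos (x : EReal) : ℝ≥0∞ := if x = ⊤ then ⊤ else ENNReal.ofReal x.toReal

/-- The extended-real valued Lebesgue integral of `u` over `s`
(well defined whenever the positive part is integrable). -/
noncomputable def esetInt {N : ℕ} (u : Euc N → EReal) (s : Set (Euc N)) : EReal :=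
  ((∫⁻ y in s, epos (u y)) : ℝ≥0∞) - ((∫⁻ y in s, epos (-(u y))) : ℝ≥0∞)

/-- The generalized sub-mean-value inequality
`u(x) ≤ K/(ν_N r^N) ∫_{B(x,r)} u dm_N` over all closed balls contained in `D`. -/
def SubMeanIneq {N : ℕ} (K : ℝ) (D : Set (Euc N)) (u : Euc N → EReal) : Prop :=
  ∀ x r, 0 < r → closedBall x r ⊆ D →
    u x ≤ ((K / (unitBallVol N * r ^ N) : ℝ) : EReal) * esetInt u (ball x r)

/-- `u` is `K`-quasinearly subharmonic n.s. (in the narrow sense) on `D`: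
`u` is measurable, `u⁺ ∈ L¹_loc(D)`, `u < +∞` and the sub-mean-value
inequality with constant `K` holds on all closed balls in `D`. -/
def QNSns {N : ℕ} (K : ℝ) (D : Set (Euc N)) (u : Euc N → EReal) : Prop :=
  1 ≤ K ∧ AEMeasurable u (volume.restrict D) ∧ (∀ x ∈ D, u x < ⊤) ∧
  LocallyIntegrableOn (fun y => ((u y) ⊔ 0).toReal) D volume ∧
  SubMeanIneq K D u

/-- The family of inequalities (for every `M ≥ 0`, applied to `u_M = max (u, -M) + M`)
defining `K`-quasinearly subharmonic functions. -/
def QNSIneqFull {N : ℕ} (K : ℝ) (D : Set (Euc N)) (u : Euc N → EReal) : Prop :=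
  ∀ M : ℝ, 0 ≤ M → ∀ x r, 0 < r → closedBall x r ⊆ D →
    (u x ⊔ ((-M : ℝ) : EReal)) + (M : EReal) ≤
      ((K / (unitBallVol N * r ^ N) : ℝ) : EReal) *
        ((∫⁻ y in ball x r, epos ((u y ⊔ ((-M : ℝ) : EReal)) + (M : EReal))) : ℝ≥0∞)

/-- `u` is `K`-quasinearly subharmonic on `D`. -/
def QNSfull {N : ℕ} (K : ℝ) (D : Set (Euc N)) (u : Euc N → EReal) : Prop :=
  1 ≤ K ∧ AEMeasurable u (volume.restrict D) ∧ (∀ x ∈ D, u x < ⊤) ∧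
  LocallyIntegrableOn (fun y => ((u y) ⊔ 0).toReal) D volume ∧
  QNSIneqFull K D u

/-- `u ∈ L¹_loc(D)` for an extended-real valued `u`. -/
def LocIntE {N : ℕ} (u : Euc N → EReal) (D : Set (Euc N)) : Prop :=
  ∀ k, k ⊆ D → IsCompact k → (∫⁻ y in k, epos (u y) + epos (-(u y))) < ⊤

/-- The sub-mean-value inequality for real-valued functions. -/
def SubMeanIneqR {N : ℕ} (K : ℝ) (D : Set (Euc N)) (u : Euc N → ℝ) : Prop :=
  ∀ x r, 0 < r → closedBall x r ⊆ D →
    u x ≤ (K / (unitBallVol N * r ^ N)) * ∫ y in ball x r, u y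

/-- The quasinearly subharmonicity inequalities (for every `M ≥ 0`,
applied to `u_M = max (u, -M) + M`) for real-valued functions. -/
def QNSIneqFullR {N : ℕ} (K : ℝ) (D : Set (Euc N)) (u : Euc N → ℝ) : Prop :=
  ∀ M : ℝ, 0 ≤ M → ∀ x r, 0 < r → closedBall x r ⊆ D →
    max (u x) (-M) + M ≤
      (K / (unitBallVol N * r ^ N)) * ∫ y in ball x r, (max (u y) (-M) + M)

/-- `u : D → [-∞, +∞)` is harmonic on `D`: it is finite (real-valued) on `D`,
continuous on `D`, and satisfies the mean value equality on all closed balls in `D`. -/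
def IsHarmonicOn {N : ℕ} (D : Set (Euc N)) (u : Euc N → EReal) : Prop :=
  (∀ x ∈ D, u x ≠ ⊥ ∧ u x ≠ ⊤) ∧ ContinuousOn (fun x => (u x).toReal) D ∧
  ∀ x r, 0 < r → closedBall x r ⊆ D →
    (u x).toReal = (1 / (unitBallVol N * r ^ N)) * ∫ y in ball x r, (u y).toReal

end

open MeasureTheory Metric Filter Topology Set
open scoped ENNReal

/-
The sub-mean-value inequality with `K > 0` forces `u x = -∞` as soon as `u⁻` has infinite integral
over an admissible ball `B(x, r)`. Let `μ = u⁻ · m_N`. Near a point of `D` where `μ` is not finite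
on any neighbourhood, the balls `B(z, 2r)` around nearby points `z` contain such a neighbourhood,
so `u = -∞` near that point. Conversely, where `u = -∞` near a point, `μ` is infinite on every
neighbourhood. Hence `D` is the disjoint union of two open sets: the points where `μ` is locally
finite and the points near which `u ≡ -∞`. By connectedness one of them is all of `D`. In the first
case compactness gives `u⁻ ∈ L¹_loc(D)`, and `u⁻ < ∞` a.e. because `D` is covered by countably
many neighbourhoods of finite `μ`-measure.
-/

lemma measurable_epos : Measurable epos :=
  Measurable.ite (measurableSet_singleton ⊤) measurable_const
    (ENNReal.measurable_ofReal.comp measurable_ereal_toReal)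

lemma epos_neg_eq_top_iff (x : EReal) : epos (-x) = ⊤ ↔ x = ⊥ := by
  induction x using EReal.rec <;> simp [epos]

lemma epos_eq_ofReal_toReal_sup_zero {x : EReal} (hx : x ≠ ⊤) :
    epos x = ENNReal.ofReal (x ⊔ 0).toReal := by
  induction x using EReal.rec with
  | bot => simp [epos]
  | coe a =>
    rcases le_total a 0 with h | h
    · simp [epos, sup_eq_right.mpr (EReal.coe_nonpos.mpr h), ENNReal.ofReal_of_nonpos h]
    · simp [epos, sup_eq_left.mpr (EReal.coe_nonneg.mpr h)]
  | top => exact absurd rfl hx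

lemma unitBallVol_pos (N : ℕ) : 0 < unitBallVol N :=
  ENNReal.toReal_pos (measure_ball_pos volume (0 : Euc N) one_pos).ne' measure_ball_lt_top.ne

namespace MeasureTheory.Measure

variable {α : Type*} [TopologicalSpace α] [MeasurableSpace α]

lemma isOpen_setOf_finiteAtFilter_nhds (μ : Measure α) :
    IsOpen {x | μ.FiniteAtFilter (𝓝 x)} := by
  refine isOpen_iff_mem_nhds.mpr fun x hx => ?_
  obtain ⟨U, ⟨hxU, hUo⟩, hμU⟩ := hx.exists_mem_basis (nhds_basis_opens x)
  exact mem_of_superset (hUo.mem_nhds hxU) fun y hy => ⟨U, hUo.mem_nhds hy, hμU⟩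

lemma not_finiteAtFilter_withDensity_nhds [OpensMeasurableSpace α] {μ : Measure α}
    [μ.IsOpenPosMeasure] {f : α → ℝ≥0∞} {x : α} (hf : ∀ᶠ y in 𝓝 x, f y = ⊤) :
    ¬ (μ.withDensity f).FiniteAtFilter (𝓝 x) := by
  rintro ⟨t, ht, hμt⟩
  obtain ⟨V, hVf, hVo, hxV⟩ := mem_nhds_iff.mp hf
  have hW : IsOpen (interior t ∩ V) := isOpen_interior.inter hVo
  have hxW : x ∈ interior t ∩ V := ⟨mem_interior_iff_mem_nhds.mpr ht, hxV⟩
  have hinf : μ.withDensity f (interior t ∩ V) = ⊤ := by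
    rw [withDensity_apply _ hW.measurableSet,
      setLIntegral_congr_fun hW.measurableSet fun y hy => hVf hy.2, setLIntegral_const]
    exact ENNReal.top_mul (hW.measure_ne_zero μ ⟨x, hxW⟩)
  exact hμt.ne (top_le_iff.mp (hinf ▸ measure_mono (inter_subset_left.trans interior_subset)))

end MeasureTheory.Measure

section WithDensity

variable {α : Type*} [TopologicalSpace α] [MeasurableSpace α] {μ : Measure α}
  {f : α → ℝ≥0∞} {s : Set α}

lemma IsCompact.setLIntegral_lt_top_of_finiteAtFilter_withDensity [OpensMeasurableSpace α]
    [T2Space α] (hs : IsCompact s) (hf : ∀ x ∈ s, (μ.withDensity f).FiniteAtFilter (𝓝 x)) :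
    ∫⁻ y in s, f y ∂μ < ⊤ :=
  (withDensity_apply f hs.measurableSet).symm.trans_lt <|
    hs.measure_lt_top_of_nhdsWithin fun x hx => (hf x hx).filter_mono nhdsWithin_le_nhds

lemma ae_restrict_ne_top_of_finiteAtFilter_withDensity [OpensMeasurableSpace α]
    [SecondCountableTopology α] (hs : MeasurableSet s) (hmeas : AEMeasurable f (μ.restrict s))
    (hf : ∀ x ∈ s, (μ.withDensity f).FiniteAtFilter (𝓝[s] x)) :
    ∀ᵐ x ∂μ.restrict s, f x ≠ ⊤ := by
  rw [ae_restrict_iff' hs, ae_iff]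
  refine measure_mono_null (t := {x | x ∈ s ∧ f x = ⊤}) (fun x hx => by simpa using hx) ?_
  refine measure_null_of_locally_null _ fun x hx => ?_
  obtain ⟨U, ⟨hxU, hUo⟩, hμU⟩ := (hf x hx.1).exists_mem_basis (nhdsWithin_basis_open x s)
  have hUs : MeasurableSet (U ∩ s) := hUo.measurableSet.inter hs
  have hlt : ∫⁻ y in U ∩ s, f y ∂μ ≠ ⊤ := ((withDensity_apply_le f _).trans_lt hμU).ne
  have hnull := ae_iff.mp ((ae_restrict_iff' hUs).mp
    (ae_lt_top' (hmeas.mono_measure (Measure.restrict_mono inter_subset_right le_rfl)) hlt))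
  refine ⟨{x | x ∈ s ∧ f x = ⊤} ∩ U, inter_mem_nhdsWithin _ (hUo.mem_nhds hxU),
    measure_mono_null (fun y hy => ?_) hnull⟩
  simp [hy.1.1, hy.1.2, hy.2]

end WithDensity
lemma locIntE_of_finiteAtFilter_withDensity {N : ℕ} {D : Set (Euc N)} {u : Euc N → EReal}
    (hmeas : AEMeasurable u (volume.restrict D)) (hfin : ∀ x ∈ D, u x < ⊤)
    (hloc : LocallyIntegrableOn (fun y => (u y ⊔ 0).toReal) D volume)
    (hneg : ∀ x ∈ D, (volume.withDensity fun y => epos (-u y)).FiniteAtFilter (𝓝 x)) :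
    LocIntE u D := by
  intro k hkD hk
  have hpos : ∫⁻ y in k, epos (u y) < ⊤ := by
    rw [setLIntegral_congr_fun hk.measurableSet
      fun y hy => epos_eq_ofReal_toReal_sup_zero (hfin y (hkD hy)).ne]
    exact (hloc.integrableOn_compact_subset hkD hk).lintegral_lt_top
  have hmeas_pos : AEMeasurable (fun y => epos (u y)) (volume.restrict k) :=
    measurable_epos.comp_aemeasurable (hmeas.mono_measure (Measure.restrict_mono hkD le_rfl))
  rw [lintegral_add_left' hmeas_pos]
  exact ENNReal.add_lt_top.mpr
    ⟨hpos, hk.setLIntegral_lt_top_of_finiteAtFilter_withDensity fun x hx => hneg x (hkD hx)⟩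

namespace SubMeanIneq

variable {N : ℕ} {K : ℝ} {D : Set (Euc N)} {u : Euc N → EReal}

lemma eq_bot_of_lintegral_eq_top (h : SubMeanIneq K D u) (hK : 0 < K) {x : Euc N} {r : ℝ}
    (hr : 0 < r) (hxr : closedBall x r ⊆ D) (htop : ∫⁻ y in ball x r, epos (-u y) = ⊤) :
    u x = ⊥ := by
  have hc : 0 < K / (unitBallVol N * r ^ N) :=
    div_pos hK (mul_pos (unitBallVol_pos N) (pow_pos hr N))
  have hint : esetInt u (ball x r) = ⊥ := by
    rw [esetInt, htop, EReal.coe_ennreal_top, EReal.sub_top]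
  simpa [hint, EReal.coe_mul_bot_of_pos hc] using h x r hr hxr

lemma eventually_eq_bot_of_not_finiteAtFilter (h : SubMeanIneq K D u) (hK : 0 < K)
    (hD : IsOpen D) {x : Euc N} (hx : x ∈ D)
    (hinf : ¬ (volume.withDensity fun y => epos (-u y)).FiniteAtFilter (𝓝 x)) :
    ∀ᶠ z in 𝓝 x, u z = ⊥ := by
  obtain ⟨ε, hε, hεD⟩ := Metric.isOpen_iff.mp hD x hx
  set r := ε / 4 with hrε
  have hr : 0 < r := by positivity
  have h3r : closedBall x (3 * r) ⊆ D := (closedBall_subset_ball (by linarith)).trans hεD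
  have htop : ∫⁻ y in ball x r, epos (-u y) = ⊤ := by
    by_contra hne
    exact hinf ⟨ball x r, ball_mem_nhds x hr,
      by rwa [withDensity_apply _ measurableSet_ball, lt_top_iff_ne_top]⟩
  filter_upwards [ball_mem_nhds x hr] with z hz
  have hzx : dist z x < r := hz
  have hball : ball x r ⊆ ball z (2 * r) := ball_subset_ball' (by rw [dist_comm]; linarith)
  exact h.eq_bot_of_lintegral_eq_top hK (by positivity)
    ((closedBall_subset_closedBall' (by linarith)).trans h3r)
    (top_le_iff.mp (htop ▸ lintegral_mono_set hball))

end SubMeanIneq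

theorem qnsns_botEverywhere_or_finiteAE_locInt_general {N : ℕ}
    (D : Set (Euc N)) (hDopen : IsOpen D) (hDconn : IsConnected D)
    (K : ℝ) (u : Euc N → EReal)
    (hu : QNSns K D u) :
    (∀ x ∈ D, u x = ⊥) ∨
      ((∀ᵐ x ∂(volume.restrict D), u x ≠ ⊥) ∧ LocIntE u D) := by
  obtain ⟨hK, hmeas, hfin, hloc, hsub⟩ := hu
  set μ := volume.withDensity fun y => epos (-u y)
  have hdisj : Disjoint {x | μ.FiniteAtFilter (𝓝 x)} {x | ∀ᶠ z in 𝓝 x, u z = ⊥} :=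
    disjoint_left.mpr fun x hμx hbot => Measure.not_finiteAtFilter_withDensity_nhds
      (hbot.mono fun z hz => (epos_neg_eq_top_iff _).mpr hz) hμx
  have hcover : D ⊆ {x | μ.FiniteAtFilter (𝓝 x)} ∪ {x | ∀ᶠ z in 𝓝 x, u z = ⊥} :=
    fun x hx => or_iff_not_imp_left.mpr
      (hsub.eventually_eq_bot_of_not_finiteAtFilter (by linarith) hDopen hx)
  rcases hDconn.isPreconnected.subset_or_subset μ.isOpen_setOf_finiteAtFilter_nhds
    isOpen_setOfPred_eventually_nhds hdisj hcover with hfinite | hbot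
  · have hmeas_neg : AEMeasurable (fun y => epos (-u y)) (volume.restrict D) :=
      (measurable_epos.comp measurable_neg).comp_aemeasurable hmeas
    have hae := ae_restrict_ne_top_of_finiteAtFilter_withDensity hDopen.measurableSet hmeas_neg
      fun x hx => (hfinite hx).filter_mono nhdsWithin_le_nhds
    exact Or.inr ⟨hae.mono fun x hx => (epos_neg_eq_top_iff _).not.mp hx,
      locIntE_of_finiteAtFilter_withDensity hmeas hfin hloc hfinite⟩
  · exact Or.inl fun x hx => (hbot hx).self_of_nhds

/-- a K-quasinearly subharmonic n.s. function on a domain is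
either identically `-∞` or finite a.e. and locally integrable. -/
theorem qnsns_botEverywhere_or_finiteAE_locInt {N : ℕ} (hN : 2 ≤ N)
    (D : Set (Euc N)) (hDopen : IsOpen D) (hDconn : IsConnected D)
    (K : ℝ) (u : Euc N → EReal)
    (hu : QNSns K D u) :
    (∀ x ∈ D, u x = ⊥) ∨
      ((∀ᵐ x ∂(volume.restrict D), u x ≠ ⊥) ∧ LocIntE u D) :=
  qnsns_botEverywhere_or_finiteAE_locInt_general D hDopen hDconn K u hu
end

section
/- The function u : ℝ² → ℝ defined by u(x,y) = -1 when y < 0 and u(x,y) = 1 when y ≥ 0 is 2-quasinearly subharmonic, but it is not quasinearly subharmonic n.s. (i.e., there is no K ≥ 1 such that u(x) ≤ K/(ν_2 r²)∫_{B(x,r)} u dm_2 for all closed balls B̄(x,r) ⊂ ℝ²). -/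
open MeasureTheory Metric
open scoped ENNReal

/-!
Write `H⁻ = {y₂ < 0}` and `H⁺ = {y₂ ≥ 0}`. The reflection `y₂ ↦ -y₂` is a measure-preserving
isometry which moves points of `H⁻` closer to any centre in `H⁺`, so a ball centred in `H⁺` has
at least half of its area in `H⁺`, and a ball centred on the axis has exactly half (the axis is
null). Every truncation `u_M` takes two values `0 ≤ a ≤ b` on `H⁻` and `H⁺`: for a centre in `H⁻`
the mean of `u_M` is at least `a`, and for a centre in `H⁺` it is at least `b / 2`, whence the
constant `2`. On the other hand `u` itself has mean `0` on balls centred at the origin, where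
`u = 1`, so no constant `K` works without truncation.
-/
lemma setIntegral_ite_mem {α : Type*} [MeasurableSpace α] {μ : Measure α} {s t : Set α}
    [DecidablePred (· ∈ t)] (hs : μ s ≠ ⊤) (ht : MeasurableSet t) (a b : ℝ) :
    ∫ y in s, (if y ∈ t then a else b) ∂μ = a * μ.real (s ∩ t) + b * μ.real (s \ t) := by
  have : IsFiniteMeasure (μ.restrict s) := isFiniteMeasure_restrict.2 hs
  rw [show (fun y => if y ∈ t then a else b) = t.piecewise (fun _ => a) (fun _ => b) from rfl,
    integral_piecewise ht (integrableOn_const (measure_ne_top _ _))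
    (integrableOn_const (measure_ne_top _ _)), setIntegral_const, setIntegral_const,
    measureReal_restrict_apply ht, measureReal_restrict_apply ht.compl, Set.inter_comm,
    ← Set.sdiff_eq_compl_inter]
  ring

lemma measurableSet_coord_neg {ι : Type*} (i : ι) :
    MeasurableSet {y : EuclideanSpace ℝ ι | y i < 0} :=
  measurableSet_lt (by fun_prop) measurable_const

lemma measurableSet_coord_nonneg {ι : Type*} (i : ι) :
    MeasurableSet {y : EuclideanSpace ℝ ι | 0 ≤ y i} :=
  measurableSet_le measurable_const (by fun_prop)

variable {ι : Type*} [Fintype ι]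

open scoped Classical in
noncomputable def coordReflection (i : ι) : EuclideanSpace ℝ ι ≃ₗᵢ[ℝ] EuclideanSpace ℝ ι :=
  LinearIsometryEquiv.piLpCongrRight 2
    fun j => if j = i then LinearIsometryEquiv.neg ℝ else LinearIsometryEquiv.refl ℝ ℝ

lemma coordReflection_apply_self (i : ι) (p : EuclideanSpace ℝ ι) :
    coordReflection i p i = -p i := by
  simp [coordReflection, LinearIsometryEquiv.piLpCongrRight_apply]

lemma coordReflection_apply_of_ne {i j : ι} (h : j ≠ i) (p : EuclideanSpace ℝ ι) :
    coordReflection i p j = p j := by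
  simp [coordReflection, LinearIsometryEquiv.piLpCongrRight_apply, h]

lemma dist_coordReflection_le {i : ι} {p x : EuclideanSpace ℝ ι} (h : p i * x i ≤ 0) :
    dist (coordReflection i p) x ≤ dist p x := by
  rw [EuclideanSpace.dist_eq, EuclideanSpace.dist_eq]
  gcongr with j
  obtain rfl | hj := eq_or_ne j i
  · rw [coordReflection_apply_self, Real.dist_eq, Real.dist_eq, ← sq_le_sq]
    nlinarith
  · rw [coordReflection_apply_of_ne hj]

lemma coordReflection_mem_ball {i : ι} {p x : EuclideanSpace ℝ ι} {r : ℝ} (hp : p ∈ ball x r)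
    (h : p i * x i ≤ 0) : coordReflection i p ∈ ball x r :=
  (dist_coordReflection_le h).trans_lt hp

lemma volume_setOf_coord_eq_zero (i : ι) : volume {y : EuclideanSpace ℝ ι | y i = 0} = 0 :=
  Measure.addHaar_submodule volume (LinearMap.ker (EuclideanSpace.projₗ (𝕜 := ℝ) (ι := ι) i))
    fun h => by
      classical
      simpa using DFunLike.congr_fun (LinearMap.ker_eq_top.1 h) (EuclideanSpace.single i (1 : ℝ))

lemma volume_ball_inter_coord_neg_le {i : ι} {x : EuclideanSpace ℝ ι} (hx : 0 ≤ x i) (r : ℝ) :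
    volume (ball x r ∩ {y | y i < 0}) ≤ volume (ball x r ∩ {y | 0 ≤ y i}) :=
  calc volume (ball x r ∩ {y | y i < 0})
      ≤ volume (coordReflection i ⁻¹' (ball x r ∩ {y | 0 ≤ y i})) :=
        measure_mono fun p ⟨hp, hpi⟩ =>
          ⟨coordReflection_mem_ball hp (mul_nonpos_of_nonpos_of_nonneg hpi.le hx),
            by simpa [coordReflection_apply_self] using hpi.le⟩
    _ = volume (ball x r ∩ {y | 0 ≤ y i}) :=
        (coordReflection i).measurePreserving.measure_preimage
          (measurableSet_ball.inter (measurableSet_coord_nonneg i)).nullMeasurableSet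

lemma volume_ball_inter_coord_nonneg_le {i : ι} {x : EuclideanSpace ℝ ι} (hx : x i ≤ 0) (r : ℝ) :
    volume (ball x r ∩ {y | 0 ≤ y i}) ≤ volume (ball x r ∩ {y | y i < 0}) :=
  calc volume (ball x r ∩ {y | 0 ≤ y i})
      ≤ volume (ball x r ∩ {y | 0 < y i} ∪ {y | y i = 0}) :=
        measure_mono fun p ⟨hp, hpi⟩ => hpi.eq_or_lt.elim (fun h => Or.inr h.symm)
          fun h => Or.inl ⟨hp, h⟩
    _ ≤ volume (ball x r ∩ {y | 0 < y i}) + volume {y : EuclideanSpace ℝ ι | y i = 0} :=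
        measure_union_le _ _
    _ = volume (ball x r ∩ {y | 0 < y i}) := by rw [volume_setOf_coord_eq_zero, add_zero]
    _ ≤ volume (coordReflection i ⁻¹' (ball x r ∩ {y | y i < 0})) :=
        measure_mono fun p ⟨hp, hpi⟩ =>
          ⟨coordReflection_mem_ball hp (mul_nonpos_of_nonneg_of_nonpos hpi.le hx),
            by simpa [coordReflection_apply_self] using hpi⟩
    _ = volume (ball x r ∩ {y | y i < 0}) :=
        (coordReflection i).measurePreserving.measure_preimage
          (measurableSet_ball.inter (measurableSet_coord_neg i)).nullMeasurableSet

lemma setIntegral_ball_ite_coord_neg (i : ι) (x : EuclideanSpace ℝ ι) (r a b : ℝ) :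
    ∫ y in ball x r, (if y i < 0 then a else b) =
      a * volume.real (ball x r ∩ {y | y i < 0}) + b * volume.real (ball x r ∩ {y | 0 ≤ y i}) := by
  have hcompl : ball x r \ {y | y i < 0} = ball x r ∩ {y | 0 ≤ y i} := by ext; simp
  rw [← hcompl]
  exact setIntegral_ite_mem measure_ball_lt_top.ne (measurableSet_coord_neg i) a b

lemma ite_coord_neg_le_two_div_mul_setIntegral {a b : ℝ} (ha : 0 ≤ a) (hab : a ≤ b) (i : ι)
    (x : EuclideanSpace ℝ ι) {r : ℝ} (hr : 0 < r) :
    (if x i < 0 then a else b) ≤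
      2 / volume.real (ball x r) * ∫ y in ball x r, (if y i < 0 then a else b) := by
  have hV : 0 < volume.real (ball x r) :=
    ENNReal.toReal_pos (measure_ball_pos volume x hr).ne' measure_ball_lt_top.ne
  have hsplit : volume.real (ball x r ∩ {y | y i < 0}) + volume.real (ball x r ∩ {y | 0 ≤ y i}) =
      volume.real (ball x r) := by
    rw [← measureReal_inter_add_sdiff (s := ball x r) (measurableSet_coord_neg i)]
    congr 2
    ext; simp
  rw [setIntegral_ball_ite_coord_neg, div_mul_eq_mul_div, le_div_iff₀ hV, ← hsplit]
  set lower := volume.real (ball x r ∩ {y | y i < 0})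
  set upper := volume.real (ball x r ∩ {y | 0 ≤ y i})
  have hlower : 0 ≤ lower := measureReal_nonneg
  have hupper : 0 ≤ upper := measureReal_nonneg
  split_ifs with hx
  · nlinarith [mul_le_mul_of_nonneg_right hab hupper, mul_nonneg ha hlower, mul_nonneg ha hupper]
  · have : lower ≤ upper := ENNReal.toReal_mono (measure_ne_top_of_subset Set.inter_subset_left
      measure_ball_lt_top.ne) (volume_ball_inter_coord_neg_le (not_lt.1 hx) r)
    nlinarith [mul_le_mul_of_nonneg_left this (ha.trans hab), mul_nonneg ha hlower]

lemma setIntegral_ball_zero_ite_coord_neg_eq_zero (i : ι) (r : ℝ) :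
    ∫ y in ball (0 : EuclideanSpace ℝ ι) r, (if y i < 0 then (-1 : ℝ) else 1) = 0 := by
  have hzero : (0 : EuclideanSpace ℝ ι) i = 0 := rfl
  rw [setIntegral_ball_ite_coord_neg, measureReal_def, measureReal_def,
    le_antisymm (volume_ball_inter_coord_neg_le hzero.ge r)
      (volume_ball_inter_coord_nonneg_le hzero.le r)]
  ring

lemma measureReal_ball_eq_unitBallVol_mul {N : ℕ} (x : Euc N) {r : ℝ} (hr : 0 < r) :
    volume.real (ball x r) = unitBallVol N * r ^ N := by
  rw [measureReal_def, Measure.addHaar_ball_of_pos volume x hr, ENNReal.toReal_mul,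
    ENNReal.toReal_ofReal (by positivity), finrank_euclideanSpace_fin, unitBallVol, mul_comm]

/-- the sign-like step function on `ℝ²` (value `-1` for `y < 0`,
value `1` for `y ≥ 0`) is 2-quasinearly subharmonic but not quasinearly
subharmonic n.s. -/
theorem stepFunction_twoQns_not_qnsns :
    QNSIneqFullR 2 (Set.univ : Set (Euc 2))
      (fun p => if p 1 < 0 then (-1 : ℝ) else 1) ∧
    ¬ ∃ K : ℝ, 1 ≤ K ∧ SubMeanIneqR K (Set.univ : Set (Euc 2))
      (fun p => if p 1 < 0 then (-1 : ℝ) else 1) := by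
  constructor
  · intro M _ x r hr _
    have htrunc : ∀ y : Euc 2, max (if y 1 < 0 then (-1 : ℝ) else 1) (-M) + M =
        if y 1 < 0 then max (-1) (-M) + M else max 1 (-M) + M :=
      fun y => apply_ite (fun t => max t (-M) + M) _ _ _
    simp only [htrunc, ← measureReal_ball_eq_unitBallVol_mul x hr]
    exact ite_coord_neg_le_two_div_mul_setIntegral (by linarith [le_max_right (-1 : ℝ) (-M)])
      (by gcongr; norm_num) 1 x hr
  · rintro ⟨K, -, hK⟩
    have h := hK 0 1 one_pos (Set.subset_univ _)
    rw [setIntegral_ball_zero_ite_coord_neg_eq_zero] at h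
    norm_num at h
end

section
/- If u_j : D → [-∞, +∞), j = 1, 2, …, are K-quasinearly subharmonic n.s. on a domain D ⊆ ℝ^N, N ≥ 2, and u_j decreases pointwise to u as j → +∞, then u is K-quasinearly subharmonic n.s. -/
open MeasureTheory Metric
open scoped ENNReal

/-!
The positive parts `(u j)⁺` decrease to `v⁺` and, on a ball compactly inside `D`, the first one
has finite integral, so monotone convergence applies to them; the negative parts increase to `v⁻`.
Hence `∫_B u j → ∫_B v` in `EReal` (the limit is never of the form `⊤ - ⊤`), and the inequality
`v x ≤ u j x ≤ K/(ν_N r^N) ∫_B u j` passes to the limit. Measurability and local integrability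
of `v⁺` follow from `v ≤ u 0`.
-/

open Filter Topology

lemma epos_eq_toENNReal (x : EReal) : epos x = x.toENNReal := rfl

namespace EReal

lemma toENNReal_iInf {ι : Sort*} (f : ι → EReal) :
    (⨅ i, f i).toENNReal = ⨅ i, (f i).toENNReal :=
  Monotone.map_iInf_of_continuousAt continuous_toENNReal.continuousAt
    (fun _ _ => toENNReal_le_toENNReal) toENNReal_top

lemma toENNReal_iSup {ι : Sort*} (f : ι → EReal) :
    (⨆ i, f i).toENNReal = ⨆ i, (f i).toENNReal :=
  Monotone.map_iSup_of_continuousAt continuous_toENNReal.continuousAt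
    (fun _ _ => toENNReal_le_toENNReal) toENNReal_bot

lemma toENNReal_eq_ofReal_toReal_sup_zero {x : EReal} (hx : x ≠ ⊤) :
    x.toENNReal = ENNReal.ofReal (x ⊔ 0).toReal := by
  induction x with
  | bot => simp
  | coe r => rcases le_total r 0 with h | h <;> simp [h, ENNReal.ofReal_of_nonpos]
  | top => exact absurd rfl hx

protected lemma Tendsto.sub {α : Type*} {l : Filter α} {a b : α → EReal} {x y : EReal}
    (ha : Tendsto a l (𝓝 x)) (hb : Tendsto b l (𝓝 y)) (htop : x ≠ ⊤ ∨ y ≠ ⊤)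
    (hbot : x ≠ ⊥ ∨ y ≠ ⊥) : Tendsto (fun i => a i - b i) l (𝓝 (x - y)) := by
  simp_rw [sub_eq_add_neg]
  exact (continuousAt_add (by simpa using htop) (by simpa using hbot)).tendsto.comp
    (ha.prodMk_nhds hb.neg)

lemma neg_iInf {ι : Sort*} (f : ι → EReal) : -(⨅ i, f i) = ⨆ i, -f i :=
  negOrderIso.map_iInf f

end EReal

lemma lintegral_epos_ne_top {α : Type*} [MeasurableSpace α] {μ : Measure α} {f : α → EReal}
    (hf : Integrable (fun y => (f y ⊔ 0).toReal) μ) (htop : ∀ᵐ y ∂μ, f y ≠ ⊤) :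
    ∫⁻ y, epos (f y) ∂μ ≠ ⊤ := by
  refine (lt_of_eq_of_lt (lintegral_congr_ae ?_) hf.2).ne
  filter_upwards [htop] with y hy
  rw [epos_eq_toENNReal, EReal.toENNReal_eq_ofReal_toReal_sup_zero hy,
    Real.enorm_of_nonneg (EReal.toReal_nonneg le_sup_right)]

lemma MeasureTheory.LocallyIntegrableOn.toReal_sup_zero_of_le {X : Type*} [TopologicalSpace X]
    [T2Space X] [LocallyCompactSpace X] [MeasurableSpace X] [OpensMeasurableSpace X] {μ : Measure X}
    {D : Set X} {f g : X → EReal} (hg : LocallyIntegrableOn (fun y => (g y ⊔ 0).toReal) D μ)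
    (hD : IsOpen D) (hf : AEMeasurable f (μ.restrict D)) (hle : ∀ y ∈ D, f y ≤ g y)
    (htop : ∀ y ∈ D, g y < ⊤) : LocallyIntegrableOn (fun y => (f y ⊔ 0).toReal) D μ := by
  rw [locallyIntegrableOn_iff hD.isLocallyClosed] at hg ⊢
  intro k hkD hk
  have hfk : AEMeasurable f (μ.restrict k) := hf.mono_measure (Measure.restrict_mono hkD le_rfl)
  refine (hg k hkD hk).mono' (hfk.sup_const 0).ereal_toReal.aestronglyMeasurable
    (ae_restrict_of_forall_mem hk.measurableSet fun y hy => ?_)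
  rw [Real.norm_of_nonneg (EReal.toReal_nonneg le_sup_right)]
  exact EReal.toReal_le_toReal (sup_le_sup_right (hle y (hkD hy)) 0)
    (ne_bot_of_le_ne_bot EReal.zero_ne_bot le_sup_right)
    (sup_lt_iff.2 ⟨htop y (hkD hy), EReal.zero_lt_top⟩).ne

theorem tendsto_esetInt_iInf {N : ℕ} {u : ℕ → Euc N → EReal} {s : Set (Euc N)}
    (hmeas : ∀ j, AEMeasurable (u j) (volume.restrict s)) (hanti : ∀ y, Antitone fun j => u j y)
    (hfin : ∫⁻ y in s, epos (u 0 y) ≠ ⊤) :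
    Tendsto (fun j => esetInt (u j) s) atTop (𝓝 (esetInt (fun y => ⨅ j, u j y) s)) := by
  have hanti_pos : Antitone fun j => ∫⁻ y in s, epos (u j y) := fun _ _ hij =>
    lintegral_mono fun y => EReal.toENNReal_le_toENNReal (hanti y hij)
  have hmono_neg : Monotone fun j => ∫⁻ y in s, epos (-u j y) := fun _ _ hij =>
    lintegral_mono fun y => EReal.toENNReal_le_toENNReal (EReal.neg_le_neg_iff.2 (hanti y hij))
  have hpos : ∫⁻ y in s, epos (⨅ j, u j y) = ⨅ j, ∫⁻ y in s, epos (u j y) := by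
    simp_rw [epos_eq_toENNReal, EReal.toENNReal_iInf]
    exact lintegral_iInf' (fun j => (hmeas j).ereal_toENNReal)
      (ae_of_all _ fun y _ _ hij => EReal.toENNReal_le_toENNReal (hanti y hij)) hfin
  have hneg : ∫⁻ y in s, epos (-⨅ j, u j y) = ⨆ j, ∫⁻ y in s, epos (-u j y) := by
    simp_rw [EReal.neg_iInf, epos_eq_toENNReal, EReal.toENNReal_iSup]
    exact lintegral_iSup' (fun j => (hmeas j).neg.ereal_toENNReal) (ae_of_all _ fun y _ _ hij =>
      EReal.toENNReal_le_toENNReal (EReal.neg_le_neg_iff.2 (hanti y hij)))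
  have hpos_ne_top : ((⨅ j, ∫⁻ y in s, epos (u j y) : ℝ≥0∞) : EReal) ≠ ⊤ :=
    EReal.coe_ennreal_eq_top_iff.not.2 (ne_top_of_le_ne_top hfin (iInf_le _ 0))
  unfold esetInt
  rw [hpos, hneg]
  exact EReal.Tendsto.sub
    ((continuous_coe_ennreal_ereal.tendsto _).comp (tendsto_atTop_iInf hanti_pos))
    ((continuous_coe_ennreal_ereal.tendsto _).comp (tendsto_atTop_iSup hmono_neg))
    (Or.inl hpos_ne_top) (Or.inl (EReal.coe_ennreal_ne_bot _))

theorem SubMeanIneq.iInf {N : ℕ} {K : ℝ} {D : Set (Euc N)} {u : ℕ → Euc N → EReal}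
    (hsub : ∀ j, SubMeanIneq K D (u j)) (hmeas : ∀ j, AEMeasurable (u j) (volume.restrict D))
    (hanti : ∀ y, Antitone fun j => u j y)
    (hint : LocallyIntegrableOn (fun y => (u 0 y ⊔ 0).toReal) D volume)
    (htop : ∀ y ∈ D, u 0 y < ⊤) : SubMeanIneq K D fun y => ⨅ j, u j y := by
  intro x r hr hball
  have hballD : ball x r ⊆ D := ball_subset_closedBall.trans hball
  have hfin : ∫⁻ y in ball x r, epos (u 0 y) ≠ ⊤ :=
    lintegral_epos_ne_top
      ((hint.integrableOn_compact_subset hball (isCompact_closedBall x r)).mono_set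
        ball_subset_closedBall)
      (ae_restrict_of_forall_mem measurableSet_ball fun y hy => (htop y (hballD hy)).ne)
  have hlim := EReal.Tendsto.const_mul (a := ((K / (unitBallVol N * r ^ N) : ℝ) : EReal))
    (tendsto_esetInt_iInf
      (fun j => (hmeas j).mono_measure (Measure.restrict_mono hballD le_rfl)) hanti hfin)
    (Or.inl (EReal.coe_ne_bot _)) (Or.inl (EReal.coe_ne_top _))
  exact ge_of_tendsto' hlim fun j => (iInf_le _ j).trans (hsub j x r hr hball)

theorem qnsns_of_antitone_limit_general {N : ℕ}
    (D : Set (Euc N)) (hDopen : IsOpen D)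
    (K : ℝ) (u : ℕ → Euc N → EReal) (v : Euc N → EReal)
    (hqns : ∀ j, QNSns K D (u j))
    (hmono : ∀ j x, u (j + 1) x ≤ u j x)
    (hlim : ∀ x, v x = ⨅ j, u j x) :
    QNSns K D v := by
  obtain rfl : v = fun x => ⨅ j, u j x := funext hlim
  have hanti : ∀ x, Antitone fun j => u j x := fun x => antitone_nat_of_succ_le (hmono · x)
  have hmeas : ∀ j, AEMeasurable (u j) (volume.restrict D) := fun j => (hqns j).2.1
  have hle : ∀ x, ⨅ j, u j x ≤ u 0 x := fun x => iInf_le _ 0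
  obtain ⟨hK, -, htop, hint, -⟩ := hqns 0
  exact ⟨hK, AEMeasurable.iInf hmeas, fun x hx => (hle x).trans_lt (htop x hx),
    hint.toReal_sup_zero_of_le hDopen (AEMeasurable.iInf hmeas) (fun x _ => hle x) htop,
    SubMeanIneq.iInf (fun j => (hqns j).2.2.2.2) hmeas hanti hint htop⟩

/-- a decreasing pointwise limit of K-quasinearly subharmonic
n.s. functions is K-quasinearly subharmonic n.s. -/
theorem qnsns_of_antitone_limit {N : ℕ} (hN : 2 ≤ N)
    (D : Set (Euc N)) (hDopen : IsOpen D) (hDconn : IsConnected D)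
    (K : ℝ) (u : ℕ → Euc N → EReal) (v : Euc N → EReal)
    (hqns : ∀ j, QNSns K D (u j))
    (hmono : ∀ j x, u (j + 1) x ≤ u j x)
    (hlim : ∀ x, v x = ⨅ j, u j x) :
    QNSns K D v :=
  qnsns_of_antitone_limit_general D hDopen K u v hqns hmono hlim
end

section
/- Let D be a domain in ℝ^N, N ≥ 2, and let u : D → [-∞, +∞). Then u is harmonic if and only if there exists K ≥ 1 such that both u and -u are K-quasinearly subharmonic n.s. (with the same constant K). -/
open MeasureTheory Metric
open scoped ENNReal

/-!
If `u` and `-u` both satisfy the sub-mean-value inequality with the same constant `K`, then `u`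
is finite and locally integrable on `D`, and the two inequalities combine into the identity
`u(x) = K ⨍_{B(x,r)} u` on every ball. Ball integrals depend continuously on the centre because
spheres are Lebesgue-null, so `u` is continuous; letting `r → 0` gives `u = K u` on `D`, and
averaging this identity over `B(x,r)` turns `u(x) = K ⨍ u` into the mean value property.
Conversely, a harmonic function satisfies both inequalities with `K = 1`.
-/

open Filter Topology Set

section MetricSpace

variable {α : Type*} [PseudoMetricSpace α] [ProperSpace α] [MeasurableSpace α] {μ : Measure α}
  [IsFiniteMeasureOnCompacts μ] [μ.IsOpenPosMeasure] {f : α → ℝ}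

theorem ContinuousAt.tendsto_setAverage_ball {x : α} (hf : ContinuousAt f x)
    (hfi : IntegrableAtFilter f (𝓝 x) μ) :
    Tendsto (fun r => ⨍ y in ball x r, f y ∂μ) (𝓝[>] 0) (𝓝 (f x)) := by
  rw [Metric.tendsto_nhds]
  intro ε hε
  obtain ⟨s, hs, hfs⟩ := hfi
  obtain ⟨δ, hδ, hball⟩ := Metric.mem_nhds_iff.1
    (inter_mem hs (hf.preimage_mem_nhds (ball_mem_nhds (f x) hε)))
  filter_upwards [Ioo_mem_nhdsGT hδ] with r ⟨hr, hrδ⟩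
  have hsub : ball x r ⊆ s ∩ f ⁻¹' ball (f x) ε := (ball_subset_ball hrδ.le).trans hball
  have hint : IntegrableOn f (ball x r) μ := hfs.mono_set fun y hy => (hsub hy).1
  have hμ0 : μ (ball x r) ≠ 0 := (measure_ball_pos μ x hr).ne'
  obtain ⟨y, hy, hy_le⟩ := exists_le_setAverage hμ0 measure_ball_lt_top.ne hint
  obtain ⟨z, hz, hz_ge⟩ := exists_setAverage_le hμ0 measure_ball_lt_top.ne hint
  have hfy := mem_ball.1 (hsub hy).2
  have hfz := mem_ball.1 (hsub hz).2
  rw [Real.dist_eq, abs_lt] at hfy hfz ⊢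
  constructor <;> linarith

theorem eq_setAverage_ball_of_eq_mul_setAverage_ball [OpensMeasurableSpace α] {D : Set α}
    (hD : IsOpen D) (hf : ContinuousOn f D) {K : ℝ}
    (hmv : ∀ x r, 0 < r → closedBall x r ⊆ D → f x = K * ⨍ y in ball x r, f y ∂μ) :
    ∀ x r, 0 < r → closedBall x r ⊆ D → f x = ⨍ y in ball x r, f y ∂μ := by
  have hfix : ∀ x ∈ D, f x = K * f x := by
    intro x hx
    have hlim := ((hf.continuousAt (hD.mem_nhds hx)).tendsto_setAverage_ball (μ := μ)
      (by simpa [hD.nhdsWithin_eq hx] using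
        hf.integrableAt_nhdsWithin hD.measurableSet hx)).const_mul K
    obtain ⟨ε, hε, hεD⟩ := Metric.nhds_basis_closedBall.mem_iff.1 (hD.mem_nhds hx)
    refine tendsto_nhds_unique (tendsto_const_nhds.congr' ?_) hlim
    filter_upwards [Ioo_mem_nhdsGT hε] with r ⟨hr, hrε⟩
    exact hmv x r hr ((closedBall_subset_closedBall hrε.le).trans hεD)
  intro x r hr hsub
  have hball : EqOn f (fun y => K * f y) (ball x r) := fun y hy =>
    hfix y (hsub (ball_subset_closedBall hy))
  calc f x = K * ⨍ y in ball x r, f y ∂μ := hmv x r hr hsub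
    _ = ⨍ y in ball x r, K * f y ∂μ := by
      rw [setAverage_eq, setAverage_eq, integral_const_mul, smul_eq_mul, smul_eq_mul,
        mul_left_comm]
    _ = ⨍ y in ball x r, f y ∂μ :=
      setAverage_congr_fun measurableSet_ball (ae_of_all _ fun y hy => (hball hy).symm)

end MetricSpace

section NormedSpace

variable {E : Type*} [NormedAddCommGroup E] [NormedSpace ℝ E] [FiniteDimensional ℝ E]
  [Nontrivial E] [MeasurableSpace E] [BorelSpace E] {μ : Measure E} [μ.IsAddHaarMeasure]
  {f : E → ℝ}

theorem continuousAt_setIntegral_ball {x₀ : E} {r R : ℝ} (hrR : r < R)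
    (hf : IntegrableOn f (ball x₀ R) μ) :
    ContinuousAt (fun x => ∫ y in ball x r, f y ∂μ) x₀ := by
  simp_rw [← integral_indicator measurableSet_ball]
  have hnear : ∀ᶠ x in 𝓝 x₀, ball x r ⊆ ball x₀ R := by
    filter_upwards [ball_mem_nhds x₀ (sub_pos.2 hrR)] with x hx
    exact ball_subset_ball' (by rw [mem_ball] at hx; linarith)
  refine continuousAt_of_dominated (bound := (ball x₀ R).indicator fun y => ‖f y‖) ?_ ?_
    (IntegrableOn.integrable_indicator hf.norm measurableSet_ball) ?_
  · filter_upwards [hnear] with x hx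
    exact ((hf.mono_set hx).integrable_indicator measurableSet_ball).aestronglyMeasurable
  · filter_upwards [hnear] with x hx
    refine ae_of_all _ fun y => ?_
    by_cases hy : y ∈ ball x r
    · simp [indicator_of_mem hy, indicator_of_mem (hx hy)]
    · simpa [indicator_of_notMem hy] using indicator_nonneg (fun _ _ => abs_nonneg _) y
  · have hsphere : ∀ᵐ y ∂μ, y ∉ sphere x₀ r := measure_eq_zero_iff_ae_notMem.1
      (Measure.addHaar_sphere μ x₀ r)
    -- off the null sphere, `x ↦ (ball x r).indicator f y` is locally constant near `x₀`
    filter_upwards [hsphere] with y hy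
    rcases lt_or_gt_of_ne (mem_sphere.not.1 hy) with hlt | hgt
    · refine (continuousAt_const (y := f y)).congr ?_
      filter_upwards [ball_mem_nhds x₀ (sub_pos.2 hlt)] with x hx
      have : y ∈ ball x r := by
        rw [mem_ball] at hx ⊢
        linarith [dist_triangle y x₀ x, dist_comm x x₀]
      simp [indicator_of_mem this]
    · refine (continuousAt_const (y := 0)).congr ?_
      filter_upwards [ball_mem_nhds x₀ (sub_pos.2 hgt)] with x hx
      have : y ∉ ball x r := by
        rw [mem_ball] at hx ⊢
        linarith [dist_triangle y x x₀]
      simp [indicator_of_notMem this]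

theorem continuousOn_of_eq_mul_setIntegral_ball {D : Set E} (hD : IsOpen D)
    (hf : LocallyIntegrableOn f D μ) (c : ℝ → ℝ)
    (hmv : ∀ x r, 0 < r → closedBall x r ⊆ D → f x = c r * ∫ y in ball x r, f y ∂μ) :
    ContinuousOn f D := by
  intro x₀ hx₀
  obtain ⟨ε, hε, hεD⟩ := Metric.nhds_basis_closedBall.mem_iff.1 (hD.mem_nhds hx₀)
  have hint : IntegrableOn f (ball x₀ ε) μ :=
    (hf.integrableOn_compact_subset hεD (isCompact_closedBall x₀ ε)).mono_set
      ball_subset_closedBall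
  have hlocal : f =ᶠ[𝓝 x₀] fun x => c (ε / 2) * ∫ y in ball x (ε / 2), f y ∂μ := by
    filter_upwards [ball_mem_nhds x₀ (half_pos hε)] with x hx
    refine hmv x _ (half_pos hε) ((closedBall_subset_closedBall' ?_).trans hεD)
    rw [mem_ball] at hx
    linarith
  refine ContinuousAt.continuousWithinAt ?_
  exact ((continuousAt_setIntegral_ball (half_lt_self hε) hint).const_mul _).congr hlocal.symm

end NormedSpace

section EuclideanSpace

variable {N : ℕ}

theorem measureReal_ball_euc (x : Euc N) {r : ℝ} (hr : 0 < r) :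
    volume.real (ball x r) = unitBallVol N * r ^ N := by
  rw [measureReal_def, Measure.addHaar_ball_of_pos volume x hr, finrank_euclideanSpace_fin,
    ENNReal.toReal_mul, ENNReal.toReal_ofReal (by positivity), unitBallVol, mul_comm]

theorem div_mul_setIntegral_ball_eq_mul_setAverage (K : ℝ) (f : Euc N → ℝ) (x : Euc N)
    {r : ℝ} (hr : 0 < r) :
    K / (unitBallVol N * r ^ N) * ∫ y in ball x r, f y = K * ⨍ y in ball x r, f y := by
  rw [setAverage_eq, measureReal_ball_euc x hr, smul_eq_mul, div_eq_mul_inv, mul_assoc]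

theorem EReal.toReal_sup_zero (a : EReal) : (a ⊔ 0).toReal = max a.toReal 0 := by
  induction a using EReal.rec with
  | bot => simp
  | top => simp
  | coe a => rw [← EReal.coe_zero, ← EReal.coe_strictMono.monotone.map_max, EReal.toReal_coe,
    EReal.toReal_coe]

theorem epos_coe (a : ℝ) : epos a = ENNReal.ofReal a := by
  simp [epos]

theorem esetInt_eq_integral {u : Euc N → EReal} {f : Euc N → ℝ} {s : Set (Euc N)}
    (hs : MeasurableSet s) (hu : EqOn u (fun y => (f y : EReal)) s) (hf : IntegrableOn f s) :
    esetInt u s = ((∫ y in s, f y : ℝ) : EReal) := by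
  have hpos : ∫⁻ y in s, epos (u y) = ∫⁻ y in s, ENNReal.ofReal (f y) :=
    setLIntegral_congr_fun hs fun y hy => by rw [hu hy, epos_coe]
  have hneg : ∫⁻ y in s, epos (-u y) = ∫⁻ y in s, ENNReal.ofReal (-f y) :=
    setLIntegral_congr_fun hs fun y hy => by rw [hu hy, ← EReal.coe_neg, epos_coe]
  rw [esetInt, hpos, hneg, integral_eq_lintegral_pos_part_sub_lintegral_neg_part hf,
    EReal.coe_sub, EReal.coe_ennreal_toReal hf.lintegral_lt_top.ne,
    EReal.coe_ennreal_toReal (Integrable.lintegral_lt_top (f := fun y => -f y) hf.neg).ne]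

theorem subMeanIneq_iff_subMeanIneqR {K : ℝ} {D : Set (Euc N)} {u : Euc N → EReal}
    {f : Euc N → ℝ} (hu : EqOn u (fun y => (f y : EReal)) D) (hf : LocallyIntegrableOn f D) :
    SubMeanIneq K D u ↔ SubMeanIneqR K D f := by
  refine forall₄_congr fun x r hr hsub => ?_
  have hball : ball x r ⊆ D := ball_subset_closedBall.trans hsub
  rw [hu (hsub (mem_closedBall_self hr.le)), esetInt_eq_integral measurableSet_ball (hu.mono hball)
    ((hf.integrableOn_compact_subset hsub (isCompact_closedBall x r)).mono_set
      ball_subset_closedBall), ← EReal.coe_mul, EReal.coe_le_coe_iff]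

theorem SubMeanIneqR.eq_of_neg {K : ℝ} {D : Set (Euc N)} {f : Euc N → ℝ}
    (hf : SubMeanIneqR K D f) (hnf : SubMeanIneqR K D fun y => -f y) :
    ∀ x r, 0 < r → closedBall x r ⊆ D →
      f x = K / (unitBallVol N * r ^ N) * ∫ y in ball x r, f y := by
  intro x r hr hsub
  have := hnf x r hr hsub
  rw [integral_neg, mul_neg, neg_le_neg_iff] at this
  exact (hf x r hr hsub).antisymm this

section QNSns

variable {K : ℝ} {D : Set (Euc N)} {u : Euc N → EReal}

theorem QNSns.ne_bot_and_ne_top (hu : QNSns K D u) (hnu : QNSns K D fun x => -u x) :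
    ∀ x ∈ D, u x ≠ ⊥ ∧ u x ≠ ⊤ := fun x hx =>
  ⟨EReal.neg_eq_top_iff.not.1 (hnu.2.2.1 x hx).ne, (hu.2.2.1 x hx).ne⟩

theorem QNSns.locallyIntegrableOn_toReal (hu : QNSns K D u) (hnu : QNSns K D fun x => -u x) :
    LocallyIntegrableOn (fun y => (u y).toReal) D := by
  have hsplit : (fun y => (u y).toReal) = fun y => (u y ⊔ 0).toReal - (-u y ⊔ 0).toReal :=
    funext fun y => by
      rw [EReal.toReal_sup_zero, EReal.toReal_sup_zero, EReal.toReal_neg_eq, max_zero_sub_eq_self]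
  rw [hsplit]
  exact hu.2.2.2.1.sub hnu.2.2.2.1

theorem QNSns.eq_mul_setIntegral_ball (hu : QNSns K D u) (hnu : QNSns K D fun x => -u x) :
    ∀ x r, 0 < r → closedBall x r ⊆ D →
      (u x).toReal = K / (unitBallVol N * r ^ N) * ∫ y in ball x r, (u y).toReal := by
  have hfin := hu.ne_bot_and_ne_top hnu
  have hloc := hu.locallyIntegrableOn_toReal hnu
  have heq : EqOn u (fun y => ((u y).toReal : EReal)) D := fun y hy =>
    (EReal.coe_toReal (hfin y hy).2 (hfin y hy).1).symm
  refine SubMeanIneqR.eq_of_neg ((subMeanIneq_iff_subMeanIneqR heq hloc).1 hu.2.2.2.2)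
    ((subMeanIneq_iff_subMeanIneqR (fun y hy => ?_) hloc.neg).1 hnu.2.2.2.2)
  exact congrArg Neg.neg (heq hy)

theorem qnsns_of_eqOn_coe (hD : IsOpen D) (hK : 1 ≤ K) {f : Euc N → ℝ} (hf : ContinuousOn f D)
    (hu : EqOn u (fun y => (f y : EReal)) D) (hmv : SubMeanIneqR K D f) : QNSns K D u := by
  have hmeas : AEMeasurable u (volume.restrict D) :=
    (measurable_coe_real_ereal.comp_aemeasurable (hf.aemeasurable hD.measurableSet)).congr
      ((ae_restrict_iff' hD.measurableSet).2 (ae_of_all _ fun y hy => (hu hy).symm))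
  have hpos : ContinuousOn (fun y => (u y ⊔ 0).toReal) D :=
    (hf.sup continuousOn_const).congr fun y hy => by
      rw [EReal.toReal_sup_zero, hu hy, EReal.toReal_coe]
  refine ⟨hK, hmeas, fun y hy => ?_, hpos.locallyIntegrableOn hD.measurableSet,
    (subMeanIneq_iff_subMeanIneqR hu (hf.locallyIntegrableOn hD.measurableSet)).2 hmv⟩
  rw [hu hy]
  exact EReal.coe_lt_top _

theorem IsHarmonicOn.qnsns_one (hD : IsOpen D) (h : IsHarmonicOn D u) :
    QNSns 1 D u ∧ QNSns 1 D fun x => -u x := by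
  obtain ⟨hfin, hcont, hmv⟩ := h
  have hu : EqOn u (fun y => ((u y).toReal : EReal)) D := fun y hy =>
    (EReal.coe_toReal (hfin y hy).2 (hfin y hy).1).symm
  refine ⟨qnsns_of_eqOn_coe hD le_rfl hcont hu fun x r hr hsub => (hmv x r hr hsub).le,
    qnsns_of_eqOn_coe hD le_rfl (f := fun y => -(u y).toReal) hcont.neg
      (fun y hy => congrArg Neg.neg (hu hy)) fun x r hr hsub => ?_⟩
  rw [integral_neg, mul_neg, neg_le_neg_iff]
  exact (hmv x r hr hsub).ge

theorem isHarmonicOn_of_qnsns [Nontrivial (Euc N)] (hD : IsOpen D) (hu : QNSns K D u)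
    (hnu : QNSns K D fun x => -u x) : IsHarmonicOn D u := by
  have hmv := hu.eq_mul_setIntegral_ball hnu
  have hcont := continuousOn_of_eq_mul_setIntegral_ball hD (hu.locallyIntegrableOn_toReal hnu) _ hmv
  refine ⟨hu.ne_bot_and_ne_top hnu, hcont, fun x r hr hsub => ?_⟩
  rw [div_mul_setIntegral_ball_eq_mul_setAverage _ _ _ hr, one_mul]
  exact eq_setAverage_ball_of_eq_mul_setAverage_ball hD hcont
    (fun y s hs hys => (hmv y s hs hys).trans (div_mul_setIntegral_ball_eq_mul_setAverage _ _ _ hs))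
    x r hr hsub

end QNSns

end EuclideanSpace

theorem harmonic_iff_qnsns_sameK_general {N : ℕ} (hN : 2 ≤ N)
    (D : Set (Euc N)) (hDopen : IsOpen D)
    (u : Euc N → EReal) :
    IsHarmonicOn D u ↔
      ∃ K : ℝ, QNSns K D u ∧ QNSns K D (fun x => -(u x)) := by
  have : NeZero N := ⟨by omega⟩
  exact ⟨fun h => ⟨1, h.qnsns_one hDopen⟩,
    fun ⟨_, hu, hnu⟩ => isHarmonicOn_of_qnsns hDopen hu hnu⟩

/-- `u` is harmonic on `D` iff there exists `K ≥ 1` such that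
both `u` and `-u` are K-quasinearly subharmonic n.s. -/
theorem harmonic_iff_qnsns_sameK {N : ℕ} (hN : 2 ≤ N)
    (D : Set (Euc N)) (hDopen : IsOpen D) (hDconn : IsConnected D)
    (u : Euc N → EReal) :
    IsHarmonicOn D u ↔
      ∃ K : ℝ, QNSns K D u ∧ QNSns K D (fun x => -(u x)) :=
  harmonic_iff_qnsns_sameK_general hN D hDopen u
end
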